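/- arXiv:hep-th/0201122 — 2 statements merged into one kernel-verified Lean document; each statement's English description precedes it below -/
import Mathlib

section
/- Let s = ∑_{j≥0} s^{(j)} be nilpotent with degree-raising components, and suppose the cohomology of s^{(0)} is trivial in all positive degrees (every s^{(0)}-closed element of positive degree is s^{(0)}-exact). Then every s^{(0)}-closed element I^{(0)} of degree zero can be completed to an s-closed element: there exist I^{(k)} ∈ Σ^{(k)} for k ≥ 1 such that I = ∑_{k≥0} I^{(k)} satisfies sI = 0, i.e., the recursion ∑_{j=0}^{m} s^{(j)} I^{(m-j)} = 0 holds for all m ≥ 0. -/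
variable {K : Type*} [Field K] {V : ℕ → Type*} [∀ n, AddCommGroup (V n)] [∀ n, Module K (V n)]

/-- Cast between graded components along an equality of degrees. -/
def gcast {m n : ℕ} (h : m = n) : V m ≃ₗ[K] V n := by subst h; exact LinearEquiv.refl K _

/-- The operator `s = ∑_{j≥0} s^{(j)}` on the degree completion `Σ̂ = ∏_n V n`,
built from its degree-raising components `g j k : V k →ₗ V (k+j)`:
`(s x)^{(n)} = ∑_{k ≤ n} s^{(n-k)} x^{(k)}`. -/
noncomputable def sAct (g : ∀ j k, V k →ₗ[K] V (k + j)) : (∀ n, V n) →ₗ[K] (∀ n, V n) where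
  toFun x n := ∑ p ∈ (Finset.range (n + 1)).attach,
    gcast (K := K) (V := V)
      (show (p : ℕ) + (n - (p : ℕ)) = n by
        have := Finset.mem_range.mp p.2; omega)
      (g (n - (p : ℕ)) (p : ℕ) (x (p : ℕ)))
  map_add' x y := funext fun n => by
    simp only [Pi.add_apply, map_add, Finset.sum_add_distrib]
  map_smul' c x := funext fun n => by
    simp only [RingHom.id_apply, Pi.smul_apply, map_smul, Finset.smul_sum]

-- helpers
theorem gcast_refl {n : ℕ} (h : n = n) (x : V n) : gcast (K := K) h x = x := rfl

noncomputable def termAux (g : ∀ j k, V k →ₗ[K] V (k + j)) (x : ∀ k, V k) (n p : ℕ) : V n :=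
  if h : p ≤ n then gcast (K := K) (show p + (n - p) = n by omega) (g (n - p) p (x p)) else 0

theorem sAct_apply (g : ∀ j k, V k →ₗ[K] V (k + j)) (x : ∀ k, V k) (n : ℕ) :
    sAct g x n = ∑ p ∈ Finset.range (n + 1), termAux g x n p := by
  rw [← Finset.sum_attach (Finset.range (n+1)) (termAux g x n)]
  show (∑ p ∈ (Finset.range (n + 1)).attach, _) = _
  refine Finset.sum_congr rfl fun p _ => ?_
  have hp : (p : ℕ) ≤ n := by have := Finset.mem_range.mp p.2; omega
  rw [termAux, dif_pos hp]

theorem gcast_gzero (g : ∀ j k, V k →ₗ[K] V (k + j)) {k j : ℕ} (hj : j = 0)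
    (h : k + j = k) (x : V k) : gcast (K := K) h (g j k x) = g 0 k x := by
  subst hj; exact gcast_refl h _

theorem termAux_self (g : ∀ j k, V k →ₗ[K] V (k + j)) (x : ∀ k, V k) (n : ℕ) :
    termAux g x n n = g 0 n (x n) := by
  rw [termAux, dif_pos le_rfl]
  exact gcast_gzero g (Nat.sub_self n) _ _

theorem termAux_congr (g : ∀ j k, V k →ₗ[K] V (k + j)) {x y : ∀ k, V k} {n p : ℕ}
    (h : x p = y p) : termAux g x n p = termAux g y n p := by
  unfold termAux; rw [h]

theorem termAux_zero (g : ∀ j k, V k →ₗ[K] V (k + j)) {x : ∀ k, V k} {n p : ℕ}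
    (h : x p = 0) : termAux g x n p = 0 := by
  unfold termAux; rw [h]
  split
  · rw [map_zero, map_zero]
  · rfl

open Classical in
noncomputable def nextVal (g : ∀ j k, V k →ₗ[K] V (k + j)) (x : ∀ k, V k) (n : ℕ) : V (n+1) :=
  if h : ∃ y : V (n+1), g 0 (n+1) y = -(sAct g x (n+1)) then h.choose else 0

noncomputable def Pseq (g : ∀ j k, V k →ₗ[K] V (k + j)) (I0 : V 0) : ℕ → ∀ k, V k
  | 0 => Pi.single 0 I0
  | n+1 => Pseq g I0 n + Pi.single (n+1) (nextVal g (Pseq g I0 n) n)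

theorem Pseq_high (g : ∀ j k, V k →ₗ[K] V (k + j)) (I0 : V 0) :
    ∀ n k, n < k → Pseq g I0 n k = 0 := by
  intro n
  induction n with
  | zero => intro k hk; exact Pi.single_eq_of_ne (by omega) _
  | succ n ih =>
    intro k hk
    show Pseq g I0 n k + Pi.single (n+1) (nextVal g (Pseq g I0 n) n) k = 0
    rw [ih k (by omega), Pi.single_eq_of_ne (by omega), add_zero]

theorem Pseq_stable (g : ∀ j k, V k →ₗ[K] V (k + j)) (I0 : V 0) :
    ∀ m n k, k ≤ n → n ≤ m → Pseq g I0 m k = Pseq g I0 n k := by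
  intro m
  induction m with
  | zero =>
    intro n k h1 h2
    obtain rfl : n = 0 := by omega
    rfl
  | succ m ih =>
    intro n k h1 h2
    rcases Nat.eq_or_lt_of_le h2 with h | h
    · rw [h]
    · show Pseq g I0 m k + Pi.single (m+1) (nextVal g (Pseq g I0 m) m) k = _
      rw [Pi.single_eq_of_ne (by omega), add_zero]
      exact ih n k h1 (by omega)

theorem Pseq_key (g : ∀ j k, V k →ₗ[K] V (k + j))
    (hs2 : ∀ x : ∀ n, V n, sAct g (sAct g x) = 0)
    (hcoh : ∀ k : ℕ, 0 < k → ∀ x : V k, g 0 k x = 0 → ∃ y : V k, g 0 k y = x)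
    (I0 : V 0) (hI0 : g 0 0 I0 = 0) :
    ∀ n, ∀ m ≤ n, sAct g (Pseq g I0 n) m = 0 := by
  intro n
  induction n with
  | zero =>
    intro m hm
    interval_cases m
    rw [sAct_apply, Finset.sum_range_one, termAux_self]
    show g 0 0 (Pi.single 0 I0 0) = 0
    rw [Pi.single_eq_same]
    exact hI0
  | succ n ih =>
    intro m hm
    rcases Nat.lt_or_ge m (n+1) with h | h
    · -- m ≤ n : reduces to previous stage
      have : sAct g (Pseq g I0 (n+1)) m = sAct g (Pseq g I0 n) m := by
        rw [sAct_apply, sAct_apply]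
        refine Finset.sum_congr rfl fun p hp => ?_
        have hp' : p ≤ n := by have := Finset.mem_range.mp hp; omega
        exact termAux_congr g (Pseq_stable g I0 (n+1) n p hp' (by omega))
      rw [this]; exact ih m (by omega)
    · have hm1 : m = n + 1 := by omega
      subst hm1
      set R := sAct g (Pseq g I0 n) (n+1) with hR
      -- Step 1: g 0 (n+1) R = 0
      have hclosed : g 0 (n+1) R = 0 := by
        have h2 : sAct g (sAct g (Pseq g I0 n)) (n+1) = 0 := by
          rw [hs2 (Pseq g I0 n)]; rfl
        rw [sAct_apply, Finset.sum_range_succ] at h2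
        rw [Finset.sum_eq_zero (fun p hp => termAux_zero g
          (ih p (by have := Finset.mem_range.mp hp; omega))), zero_add,
          termAux_self] at h2
        exact h2
      -- Step 2: existence of y with g 0 (n+1) y = -R
      have hex : ∃ y : V (n+1), g 0 (n+1) y = -R := by
        refine hcoh (n+1) (by omega) (-R) ?_
        rw [map_neg, hclosed, neg_zero]
      have hnext : g 0 (n+1) (nextVal g (Pseq g I0 n) n) = -R := by
        unfold nextVal
        rw [dif_pos hex]
        exact hex.choose_spec
      -- Step 3
      rw [sAct_apply, Finset.sum_range_succ]
      have hsum : ∑ p ∈ Finset.range (n+1), termAux g (Pseq g I0 (n+1)) (n+1) p = R := by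
        have : ∑ p ∈ Finset.range (n+1), termAux g (Pseq g I0 (n+1)) (n+1) p
            = ∑ p ∈ Finset.range (n+1), termAux g (Pseq g I0 n) (n+1) p := by
          refine Finset.sum_congr rfl fun p hp => ?_
          exact termAux_congr g (Pseq_stable g I0 (n+1) n p
            (by have := Finset.mem_range.mp hp; omega) (by omega))
        have hRsum : R = ∑ p ∈ Finset.range (n+1), termAux g (Pseq g I0 n) (n+1) p := by
          rw [hR, sAct_apply, Finset.sum_range_succ,
            termAux_zero g (Pseq_high g I0 n (n+1) (by omega)), add_zero]
        rw [this, hRsum]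
      rw [hsum, termAux_self]
      have hPP : Pseq g I0 (n+1) (n+1) = nextVal g (Pseq g I0 n) n := by
        show Pseq g I0 n (n+1) + Pi.single (n+1) (nextVal g (Pseq g I0 n) n) (n+1) = _
        rw [Pseq_high g I0 n (n+1) (by omega), Pi.single_eq_same, zero_add]
      rw [hPP, hnext, add_neg_cancel]

/-- Let `s = ∑_{j≥0} s^{(j)}` (encoded by `sAct g` with degree-raising
components `g j k : Σ^{(k)} → Σ^{(k+j)}`) be nilpotent, and suppose the cohomology of
`s^{(0)}` is trivial in all positive degrees: every `s^{(0)}`-closed element of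
positive degree is `s^{(0)}`-exact.  Then every `s^{(0)}`-closed element `I⁰` of
degree zero can be completed to an `s`-closed element: there exist `I^{(k)} ∈ Σ^{(k)}`
for `k ≥ 1` such that `I = ∑_{k≥0} I^{(k)}` satisfies `s I = 0`, i.e. the recursion
`∑_{j=0}^{m} s^{(j)} I^{(m-j)} = 0` holds for all `m ≥ 0` (which is exactly the
componentwise content of `sAct g I = 0`). -/
theorem completion_of_degree_zero_cocycle
    {K : Type*} [Field K] {V : ℕ → Type*} [∀ n, AddCommGroup (V n)] [∀ n, Module K (V n)]
    (g : ∀ j k, V k →ₗ[K] V (k + j))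
    (hs2 : ∀ x : ∀ n, V n, sAct g (sAct g x) = 0)
    (hcoh : ∀ k : ℕ, 0 < k → ∀ x : V k, g 0 k x = 0 → ∃ y : V k, g 0 k y = x)
    (I0 : V 0) (hI0 : g 0 0 I0 = 0) :
    ∃ I : ∀ n, V n, I 0 = I0 ∧ sAct g I = 0 := by
  refine ⟨fun n => Pseq g I0 n n, ?_, ?_⟩
  · show Pi.single 0 I0 0 = I0
    exact Pi.single_eq_same _ _
  · funext m
    show sAct g (fun n => Pseq g I0 n n) m = 0
    have : sAct g (fun n => Pseq g I0 n n) m = sAct g (Pseq g I0 m) m := by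
      rw [sAct_apply, sAct_apply]
      refine Finset.sum_congr rfl fun p hp => ?_
      exact termAux_congr g (Pseq_stable g I0 m p p le_rfl
        (by have := Finset.mem_range.mp hp; omega)).symm
    rw [this]
    exact Pseq_key g hs2 hcoh I0 hI0 m m le_rfl
end

section
/- Let s = ∑_{j≥0} s^{(j)} be nilpotent on the degree-completed graded space, and assume the cohomology of s^{(0)} is concentrated in degree zero (every s^{(0)}-closed element of positive degree is s^{(0)}-exact). If I is s-closed and its degree-zero component satisfies I^{(0)} = s̄^{(0)} G^{(0)} for some degree-zero G^{(0)} (where s̄^{(0)} is the degree-zero part of s restricted to degree-zero elements), then I is s-exact: I = s F for some F in the completed space. -/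
variable {K : Type*} [Field K] {V : ℕ → Type*} [∀ n, AddCommGroup (V n)] [∀ n, Module K (V n)]

section Aux
variable (g : ∀ j k, V k →ₗ[K] V (k + j))

lemma gcast_add_zero {m : ℕ} (h : m + 0 = m) (x : V (m + 0)) :
    gcast (K := K) (V := V) h x = x := rfl

lemma gcast_g_congr {j j' k : ℕ} (e : j = j') (h : k + j = k) (x : V k) :
    gcast (K := K) (V := V) h (g j k x) =
      gcast (K := K) (V := V) (show k + j' = k by omega) (g j' k x) := by subst e; rfl

lemma sAct_apply_s5 (x : ∀ n, V n) (n : ℕ) :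
    sAct g x n = ∑ p ∈ (Finset.range (n + 1)).attach,
      gcast (K := K) (V := V)
        (show (p : ℕ) + (n - (p : ℕ)) = n by
          have := Finset.mem_range.mp p.2; omega)
        (g (n - (p : ℕ)) (p : ℕ) (x (p : ℕ))) := rfl

lemma sAct_congr (x y : ∀ n, V n) (n : ℕ) (h : ∀ k ≤ n, x k = y k) :
    sAct g x n = sAct g y n := by
  rw [sAct_apply_s5, sAct_apply_s5]
  refine Finset.sum_congr rfl fun p _ => ?_
  rw [h p (by have := Finset.mem_range.mp p.2; omega)]

lemma sAct_single (m : ℕ) (y : V m) : sAct g (Pi.single m y) m = g 0 m y := by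
  rw [sAct_apply_s5]
  rw [Finset.sum_eq_single_of_mem ⟨m, Finset.self_mem_range_succ m⟩ (Finset.mem_attach _ _)]
  · rw [Pi.single_eq_same, gcast_g_congr g (Nat.sub_self m), gcast_add_zero]
  · rintro ⟨b, hb⟩ _ hne
    have : b ≠ m := fun h => hne (by simpa using h)
    simp [Pi.single_eq_of_ne this]

lemma closed_of_vanish (x : ∀ n, V n) (n : ℕ) (hx : ∀ p < n, x p = 0)
    (hn : sAct g x n = 0) : g 0 n (x n) = 0 := by
  rw [sAct_apply_s5] at hn
  rw [Finset.sum_eq_single_of_mem ⟨n, Finset.self_mem_range_succ n⟩ (Finset.mem_attach _ _)] at hn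
  · rw [gcast_g_congr g (Nat.sub_self n), gcast_add_zero] at hn
    exact hn
  · rintro ⟨b, hb⟩ _ hne
    have : b ≠ n := fun h => hne (by simpa using h)
    have hblt : b < n := by have := Finset.mem_range.mp hb; omega
    simp [hx b hblt]

end Aux

open Classical in
/-- The partial solution after `n` steps, supported in degrees `≤ n`. -/
noncomputable def build (g : ∀ j k, V k →ₗ[K] V (k + j)) (I : ∀ n, V n) (G0 : V 0) :
    ℕ → ∀ k, V k
  | 0 => Pi.single 0 G0
  | (n + 1) => build g I G0 n + Pi.single (n + 1)
      (if h : ∃ y : V (n + 1),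
          g 0 (n + 1) y = I (n + 1) - sAct g (build g I G0 n) (n + 1)
        then h.choose else 0)

section Build
variable (g : ∀ j k, V k →ₗ[K] V (k + j)) (I : ∀ n, V n) (G0 : V 0)

lemma build_succ_apply_le {n k : ℕ} (hk : k ≤ n) :
    build g I G0 (n + 1) k = build g I G0 n k := by
  have hne : k ≠ n + 1 := by omega
  simp [build, Pi.single_eq_of_ne hne]

lemma build_stable {n m k : ℕ} (hk : k ≤ n) (hnm : n ≤ m) :
    build g I G0 m k = build g I G0 n k := by
  induction m with
  | zero =>
    have : n = 0 := by omega
    subst this; rfl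
  | succ m ih =>
    rcases Nat.lt_or_ge n (m + 1) with h | h
    · rw [build_succ_apply_le g I G0 (by omega), ih (by omega)]
    · have : n = m + 1 := by omega
      subst this; rfl

lemma build_inv
    (hs2 : ∀ x : ∀ n, V n, sAct g (sAct g x) = 0)
    (hcoh : ∀ k : ℕ, 0 < k → ∀ x : V k, g 0 k x = 0 → ∃ y : V k, g 0 k y = x)
    (hI : sAct g I = 0) (hG0 : g 0 0 G0 = I 0) :
    ∀ n, ∀ k ≤ n, sAct g (build g I G0 n) k = I k := by
  intro n
  induction n with
  | zero =>
    intro k hk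
    interval_cases k
    show sAct g (Pi.single 0 G0) 0 = I 0
    rw [sAct_single]; exact hG0
  | succ n ih =>
    intro k hk
    rcases Nat.lt_or_ge k (n + 1) with hklt | hkge
    · have hkn : k ≤ n := by omega
      rw [sAct_congr g _ (build g I G0 n) k
        (fun p hp => build_succ_apply_le g I G0 (le_trans hp hkn))]
      exact ih k hkn
    · have hk1 : k = n + 1 := by omega
      subst hk1
      set A := build g I G0 n with hA
      set R := I (n + 1) - sAct g A (n + 1) with hR
      have hclosed : g 0 (n + 1) R = 0 := by
        have hD : ∀ p < n + 1, (sAct g A - I) p = 0 := by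
          intro p hp
          have := ih p (by omega)
          simp [this]
        have hD2 : sAct g (sAct g A - I) = 0 := by
          rw [map_sub, hs2 A, hI, sub_zero]
        have := closed_of_vanish g (sAct g A - I) (n + 1) hD
          (by rw [hD2]; rfl)
        have hRneg : (sAct g A - I) (n + 1) = -R := by
          simp [hR, Pi.sub_apply]
        rw [hRneg, map_neg, neg_eq_zero] at this
        exact this
      have hex : ∃ y : V (n + 1), g 0 (n + 1) y = R :=
        hcoh (n + 1) (Nat.succ_pos n) R hclosed
      have hbuild : build g I G0 (n + 1) = A + Pi.single (n + 1) hex.choose := by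
        show A + _ = A + _
        rw [dif_pos hex]
      rw [hbuild, map_add, Pi.add_apply, sAct_single, hex.choose_spec, hR]
      abel
end Build


/-- Let `s = ∑_{j≥0} s^{(j)}` (encoded by `sAct g`) be nilpotent on the
degree-completed graded space `Σ̂ = ∏_{j≥0} Σ^{(j)}`, and assume the cohomology of
`s^{(0)}` is concentrated in degree zero (every `s^{(0)}`-closed element of positive
degree is `s^{(0)}`-exact).  If `I` is `s`-closed and its degree-zero component
satisfies `I^{(0)} = s̄^{(0)} G^{(0)}` for some degree-zero `G^{(0)}` (where
`s̄^{(0)} = g 0 0` is the degree-zero part of `s` restricted to degree-zero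
elements), then `I` is `s`-exact: `I = s F` for some `F` in the completed space. -/
theorem injectivity_half_of_perturbation
    {K : Type*} [Field K] {V : ℕ → Type*} [∀ n, AddCommGroup (V n)] [∀ n, Module K (V n)]
    (g : ∀ j k, V k →ₗ[K] V (k + j))
    (hs2 : ∀ x : ∀ n, V n, sAct g (sAct g x) = 0)
    (hcoh : ∀ k : ℕ, 0 < k → ∀ x : V k, g 0 k x = 0 → ∃ y : V k, g 0 k y = x)
    (I : ∀ n, V n) (hI : sAct g I = 0)
    (G0 : V 0) (hG0 : g 0 0 G0 = I 0) :
    ∃ F : ∀ n, V n, sAct g F = I := by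
  refine ⟨fun n => build g I G0 n n, funext fun n => ?_⟩
  rw [sAct_congr g _ (build g I G0 n) n
    (fun k hk => (build_stable g I G0 le_rfl hk).symm)]
  exact build_inv g I G0 hs2 hcoh hI hG0 n n le_rfl
end
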